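/- With I the coideal spanned by μ_C(c,a)_{(1)}α(μ_C(c,a)_{(2)}) − c_{(1)}α(μ_C(c_{(2)},a)), B := C/I and π : C → B the quotient map, the action μ_C is left B-colinear: (π ⊗ C) ∘ Δ ∘ μ_C = (B ⊗ μ_C) ∘ ((π⊗C)∘Δ ⊗ A). Moreover, the image of (C ⊗ μ_C) ∘ (Δ ⊗ A) : C ⊗ A → C ⊗ C lies in the cotensor product C □_B C. -/

import Mathlib

/-! Over a field, an element of `(C/I) ⊗ C` vanishes as soon as all its contractions by
functionals on `C` do. The generators of `I` are exactly the contractions of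
`Δ(μ(c, a)) − (C ⊗ μ(-, a)) Δ(c)`, so `π ⊗ C` identifies these two tensors: this is the
colinearity. The cotensor condition for `cocan(c ⊗ a) = c₍₁₎ ⊗ μ(c₍₂₎, a)` then follows from
coassociativity together with the colinearity of `μ(-, a)`. -/

open TensorProduct LinearMap Coalgebra

variable {k A C : Type*} [Field k] [Ring A] [Algebra k A]
  [AddCommGroup C] [Module k C] [Coalgebra k C]

/-- `μ : C ⊗ A → C` is a unital, associative right `A`-action on `C`. -/
def IsAction (μ : C ⊗[k] A →ₗ[k] C) : Prop :=
  (∀ c : C, μ (c ⊗ₜ[k] (1 : A)) = c)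
  ∧ (∀ (c : C) (a a' : A), μ (μ (c ⊗ₜ[k] a) ⊗ₜ[k] a') = μ (c ⊗ₜ[k] (a * a')))

/-- Action by a fixed element `a ∈ A`: `c ↦ μ(c ⊗ a)`. -/
noncomputable def actBy (μ : C ⊗[k] A →ₗ[k] C) (a : A) : C →ₗ[k] C :=
  μ ∘ₗ (TensorProduct.mk k C A).flip a

/-- The subspace `I` of Lemma 3.2: the span of all
`μ(c,a)₍₁₎ α(μ(c,a)₍₂₎) − c₍₁₎ α(μ(c₍₂₎,a))` for `a ∈ A`, `c ∈ C`, `α ∈ Hom(C,k)`. -/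
noncomputable def coidealI (μ : C ⊗[k] A →ₗ[k] C) : Submodule k C :=
  Submodule.span k {x : C | ∃ (a : A) (c : C) (α : C →ₗ[k] k), x =
    TensorProduct.rid k C (α.lTensor C (comul (R := k) (μ (c ⊗ₜ[k] a))))
      - TensorProduct.rid k C ((α ∘ₗ actBy μ a).lTensor C (comul (R := k) c))}

/-- `(π ⊗ C) ∘ Δ : C → B ⊗ C`, where `B = C / I` and `π` the quotient map. -/
noncomputable def coactL (μ : C ⊗[k] A →ₗ[k] C) :
    C →ₗ[k] (C ⧸ coidealI μ) ⊗[k] C :=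
  (coidealI μ).mkQ.rTensor C ∘ₗ comul (R := k)

/-- `(C ⊗ π) ∘ Δ : C → C ⊗ B`. -/
noncomputable def coactR (μ : C ⊗[k] A →ₗ[k] C) :
    C →ₗ[k] C ⊗[k] (C ⧸ coidealI μ) :=
  (coidealI μ).mkQ.lTensor C ∘ₗ comul (R := k)

/-- The coaction-equalising map `C ⊗ C → C ⊗ B ⊗ C` whose kernel is the
cotensor product `C □_B C`. -/
noncomputable def cotensorEq (μ : C ⊗[k] A →ₗ[k] C) :
    C ⊗[k] C →ₗ[k] C ⊗[k] ((C ⧸ coidealI μ) ⊗[k] C) :=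
  ((TensorProduct.assoc k C (C ⧸ coidealI μ) C).toLinearMap ∘ₗ (coactR μ).rTensor C)
    - (coactL μ).lTensor C

/-- The cotensor product `C □_B C ⊆ C ⊗ C`. -/
noncomputable def cotensor (μ : C ⊗[k] A →ₗ[k] C) : Submodule k (C ⊗[k] C) :=
  LinearMap.ker (cotensorEq μ)

/-- The canonical map `cocan = (C ⊗ μ) ∘ (Δ ⊗ A) : C ⊗ A → C ⊗ C`
(taking values in `C □_B C`). -/
noncomputable def cocanF (μ : C ⊗[k] A →ₗ[k] C) : C ⊗[k] A →ₗ[k] C ⊗[k] C :=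
  μ.lTensor C ∘ₗ (TensorProduct.assoc k C C A).toLinearMap
    ∘ₗ (comul (R := k) (A := C)).rTensor A

/-- `σ` is an inverse of `cocan` regarded as a map onto `C □_B C`, i.e. the
coextension `C ↠ B` is `A`-Galois. -/
def IsCocanInverse (μ : C ⊗[k] A →ₗ[k] C) (σ : C ⊗[k] C →ₗ[k] C ⊗[k] A) : Prop :=
  (LinearMap.range (cocanF μ) ≤ cotensor μ)
  ∧ (σ ∘ₗ cocanF μ = LinearMap.id)
  ∧ (∀ x ∈ cotensor μ, cocanF μ (σ x) = x)

/-- The cotranslation map `τ̌ = (ε ⊗ A) ∘ cocan⁻¹ : C □_B C → A`, expressed via a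
linear extension `σ` of `cocan⁻¹`. -/
noncomputable def cotrans (σ : C ⊗[k] C →ₗ[k] C ⊗[k] A) : C ⊗[k] C →ₗ[k] A :=
  (TensorProduct.lid k A).toLinearMap ∘ₗ (counit (R := k) (A := C)).rTensor A ∘ₗ σ

section

variable {R M V W P : Type*} [CommRing R] [AddCommGroup M] [Module R M]
  [AddCommGroup V] [Module R V] [AddCommGroup W] [Module R W] [AddCommGroup P] [Module R P]

theorem eq_zero_of_forall_rid_lTensor_eq_zero [Module.Free R V] {t : M ⊗[R] V}
    (h : ∀ α : V →ₗ[R] R, TensorProduct.rid R M (α.lTensor M t) = 0) : t = 0 := by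
  let b := Module.Free.chooseBasis R V
  apply (TensorProduct.finsuppScalarRight R R M _).injective.comp
    (LinearEquiv.lTensor M b.repr).injective
  ext i
  have hα := h (Finsupp.lapply i ∘ₗ b.repr.toLinearMap)
  rw [LinearMap.lTensor_comp_apply] at hα
  simp only [Function.comp_apply, map_zero, Finsupp.coe_zero, Pi.zero_apply,
    TensorProduct.finsuppScalarRight_apply]
  exact hα

theorem mkQ_rTensor_eq_zero_of_forall_rid_lTensor_mem [Module.Free R V] (N : Submodule R W)
    {d : W ⊗[R] V}
    (h : ∀ α : V →ₗ[R] R, TensorProduct.rid R W (α.lTensor W d) ∈ N) :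
    N.mkQ.rTensor V d = 0 := by
  refine eq_zero_of_forall_rid_lTensor_eq_zero fun α => ?_
  have hnat : ∀ x : W ⊗[R] R,
      TensorProduct.rid R (W ⧸ N) (N.mkQ.rTensor R x) = N.mkQ (TensorProduct.rid R W x) := by
    intro x
    induction x using TensorProduct.induction_on with
    | zero => simp
    | tmul w r => simp
    | add x y hx hy => simp [hx, hy]
  rw [← LinearMap.comp_apply (α.lTensor _), LinearMap.lTensor_comp_rTensor,
    ← LinearMap.rTensor_comp_lTensor, LinearMap.comp_apply, hnat,
    Submodule.mkQ_apply, Submodule.Quotient.mk_eq_zero]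
  exact h α

theorem lTensor_assoc_tmul (f : V ⊗[R] P →ₗ[R] V) (p : P) (y : M ⊗[R] V) :
    f.lTensor M (TensorProduct.assoc R M V P (y ⊗ₜ[R] p))
      = (f ∘ₗ (TensorProduct.mk R V P).flip p).lTensor M y := by
  induction y using TensorProduct.induction_on with
  | zero => simp
  | tmul m v => simp
  | add x y hx hy => rw [TensorProduct.add_tmul, map_add, map_add, map_add, hx, hy]

end

section Cotensor

variable {R V : Type*} [CommRing R] [AddCommGroup V] [Module R V] [Coalgebra R V]

theorem assoc_rTensor_lTensor_comul (N : Submodule R V) (f : V →ₗ[R] V) (c : V) :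
    TensorProduct.assoc R V (V ⧸ N) V
        ((N.mkQ.lTensor V ∘ₗ comul).rTensor V (f.lTensor V (comul c)))
      = (map N.mkQ f).lTensor V ((comul (R := R)).lTensor V (comul c)) := by
  rw [← coassoc_apply, ← LinearMap.comp_apply (LinearMap.rTensor _ _),
    LinearMap.rTensor_comp_lTensor, LinearMap.lTensor_def V (map _ _), map_map_assoc,
    LinearMap.map_rTensor]
  rfl

theorem lTensor_lTensor_comul_of_comp_eq (N : Submodule R V) {f : V →ₗ[R] V}
    (hf : (N.mkQ.rTensor V ∘ₗ comul) ∘ₗ f = f.lTensor (V ⧸ N) ∘ₗ N.mkQ.rTensor V ∘ₗ comul)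
    (c : V) :
    (N.mkQ.rTensor V ∘ₗ comul).lTensor V (f.lTensor V (comul c))
      = (map N.mkQ f).lTensor V ((comul (R := R)).lTensor V (comul c)) := by
  rw [← LinearMap.lTensor_comp_apply, hf, ← LinearMap.comp_assoc,
    LinearMap.lTensor_comp_rTensor, LinearMap.lTensor_comp_apply]

end Cotensor

theorem cocanF_tmul (μ : C ⊗[k] A →ₗ[k] C) (c : C) (a : A) :
    cocanF μ (c ⊗ₜ[k] a) = (actBy μ a).lTensor C (comul c) :=
  lTensor_assoc_tmul μ a (comul c)

theorem coactL_comp_actBy (μ : C ⊗[k] A →ₗ[k] C) (a : A) :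
    coactL μ ∘ₗ actBy μ a = (actBy μ a).lTensor (C ⧸ coidealI μ) ∘ₗ coactL μ := by
  ext c
  have hI : (coidealI μ).mkQ.rTensor C
      (comul (actBy μ a c) - (actBy μ a).lTensor C (comul c)) = 0 :=
    mkQ_rTensor_eq_zero_of_forall_rid_lTensor_mem _ fun α => Submodule.subset_span
      ⟨a, c, α, by rw [map_sub, map_sub, ← LinearMap.lTensor_comp_apply]; rfl⟩
  rw [map_sub, sub_eq_zero] at hI
  simp only [coactL, LinearMap.comp_apply, hI]
  rw [← LinearMap.comp_apply (LinearMap.rTensor _ _),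
    ← LinearMap.comp_apply (LinearMap.lTensor _ _), LinearMap.rTensor_comp_lTensor,
    LinearMap.lTensor_comp_rTensor]

theorem lTensor_actBy_comul_mem_cotensor (μ : C ⊗[k] A →ₗ[k] C) (a : A) (c : C) :
    (actBy μ a).lTensor C (comul c) ∈ cotensor μ := by
  rw [cotensor, LinearMap.mem_ker, cotensorEq, LinearMap.sub_apply, sub_eq_zero]
  exact (assoc_rTensor_lTensor_comul _ _ c).trans
    (lTensor_lTensor_comul_of_comp_eq _ (coactL_comp_actBy μ a) c).symm

theorem action_colinear_and_cocan_into_cotensor_general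
    (μ : C ⊗[k] A →ₗ[k] C) :
    (coactL μ ∘ₗ μ
      = μ.lTensor (C ⧸ coidealI μ)
        ∘ₗ (TensorProduct.assoc k (C ⧸ coidealI μ) C A).toLinearMap
        ∘ₗ (coactL μ).rTensor A)
    ∧ LinearMap.range (cocanF μ) ≤ cotensor μ := by
  constructor
  · refine TensorProduct.ext' fun c a => ?_
    simp only [LinearMap.comp_apply, LinearMap.rTensor_tmul, LinearEquiv.coe_coe,
      lTensor_assoc_tmul]
    exact LinearMap.congr_fun (coactL_comp_actBy μ a) c
  · rintro _ ⟨y, rfl⟩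
    induction y using TensorProduct.induction_on with
    | zero => simp
    | tmul c a => rw [cocanF_tmul]; exact lTensor_actBy_comul_mem_cotensor μ a c
    | add x y hx hy => rw [map_add]; exact add_mem hx hy

/-- Lemma 3.3: the action `μ_C` is left `B`-colinear, where
`B = C/I`, and the image of `cocan = (C ⊗ μ_C) ∘ (Δ ⊗ A)` lies in the cotensor
product `C □_B C`. -/
theorem action_colinear_and_cocan_into_cotensor
    (μ : C ⊗[k] A →ₗ[k] C) (hμ : IsAction μ) :
    (coactL μ ∘ₗ μ
      = μ.lTensor (C ⧸ coidealI μ)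
        ∘ₗ (TensorProduct.assoc k (C ⧸ coidealI μ) C A).toLinearMap
        ∘ₗ (coactL μ).rTensor A)
    ∧ LinearMap.range (cocanF μ) ≤ cotensor μ :=
  action_colinear_and_cocan_into_cotensor_general μ
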